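/- Let E′ be the ideal of W generated by the six elements T₂ − 3·1, T₃ − 4·1, T₇ − 8·1, T₁₁ − 12·1, T₁₉ − 20·1, T₂₉ − 30·1, where 1 = (1, 1, 1), T₂ = (−1, −1+√2, √3), T₃ = (−2, √2, 1−√3), T₇ = (−4, 2−2√2, 2), T₁₁ = (2, 2−√2, −3+√3), T₁₉ = (−6, 2+√2, −1+3√3), T₂₉ = (2, 4√2, −6−2√3). Then the quotient ring W/E′ is isomorphic to ℤ/84ℤ. -/

import Mathlib

/-! W is generated as a ring by T₂ and T₃; indeed 1, T₂, T₃, T₂T₃, T₂T₃² is a ℤ-basis of W.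
Since T₂ ≡ 3 and T₃ ≡ 4 modulo E′, every class in W/E′ is an integer, and the relation
T₂² + (T₂ + 2)T₃² = 5 in W becomes 89 = 5, so W/E′ is a quotient of ℤ/84. Conversely, an
explicit ring homomorphism W → ℤ/84 kills E′. -/

abbrev Rng : Type := ℤ × Zsqrtd 2 × Zsqrtd 3

def Wset : Set Rng :=
  {p | p.1 ≡ p.2.1.re [ZMOD 2] ∧ p.1 ≡ p.2.2.re + p.2.2.im [ZMOD 2] ∧
       p.2.1.im ≡ p.2.2.im [ZMOD 2]}

private lemma modeq_iff (a b : ℤ) : a ≡ b [ZMOD 2] ↔ ((a : ZMod 2) = b) :=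
  (ZMod.intCast_eq_intCast_iff a b 2).symm

def W : Subring Rng where
  carrier := Wset
  zero_mem' := by refine ⟨?_, ?_, ?_⟩ <;> decide
  one_mem' := by refine ⟨?_, ?_, ?_⟩ <;> decide
  add_mem' := by
    rintro a b ⟨h1, h2, h3⟩ ⟨g1, g2, g3⟩
    refine ⟨h1.add g1, ?_, h3.add g3⟩
    simpa [add_add_add_comm] using h2.add g2
  neg_mem' := by
    rintro a ⟨h1, h2, h3⟩
    refine ⟨h1.neg, ?_, h3.neg⟩
    have := h2.neg
    simp only [Wset, Set.mem_setOf_eq, Prod.fst_neg, Prod.snd_neg, Zsqrtd.re_neg,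
      Zsqrtd.im_neg, Int.modEq_iff_dvd] at this ⊢
    omega
  mul_mem' := by
    rintro a b ⟨h1, h2, h3⟩ ⟨g1, g2, g3⟩
    simp only [Wset, Set.mem_setOf_eq, Prod.fst_mul, Prod.snd_mul, Zsqrtd.re_mul,
      Zsqrtd.im_mul, modeq_iff] at h1 h2 h3 g1 g2 g3 ⊢
    push_cast at h1 h2 h3 g1 g2 g3 ⊢
    have h0 : (2 : ZMod 2) = 0 := rfl
    refine ⟨?_, ?_, ?_⟩
    · rw [← h1, ← g1, h0]; ring
    · linear_combination (b.1 : ZMod 2) * h2 + ((a.2.2.re : ZMod 2) + a.2.2.im) * g2 -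
        ((a.2.2.im : ZMod 2) * b.2.2.im) * h0
    · linear_combination (b.2.1.im : ZMod 2) * h2 - (b.2.1.im : ZMod 2) * h1
        + (b.2.1.re : ZMod 2) * h3 + ((a.2.2.re : ZMod 2) + a.2.2.im) * g3
        + (a.2.2.im : ZMod 2) * g2 - (a.2.2.im : ZMod 2) * g1
        + ((a.2.2.im : ZMod 2) * b.2.2.im) * h0

lemma mem_W_iff (x : Rng) : x ∈ W ↔ x ∈ Wset := Iff.rfl

/-- `T₂ = (−1, −1+√2, √3)` as an element of `W`. -/
def T2w : W :=
  ⟨((-1 : ℤ), (⟨-1, 1⟩ : Zsqrtd 2), (⟨0, 1⟩ : Zsqrtd 3)), by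
    rw [mem_W_iff]; refine ⟨?_, ?_, ?_⟩ <;> decide⟩

/-- `T₃ = (−2, √2, 1−√3)` as an element of `W`. -/
def T3w : W :=
  ⟨((-2 : ℤ), (⟨0, 1⟩ : Zsqrtd 2), (⟨1, -1⟩ : Zsqrtd 3)), by
    rw [mem_W_iff]; refine ⟨?_, ?_, ?_⟩ <;> decide⟩

/-- `T₇ = (−4, 2−2√2, 2)` as an element of `W`. -/
def T7w : W :=
  ⟨((-4 : ℤ), (⟨2, -2⟩ : Zsqrtd 2), (⟨2, 0⟩ : Zsqrtd 3)), by
    rw [mem_W_iff]; refine ⟨?_, ?_, ?_⟩ <;> decide⟩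

/-- `T₁₁ = (2, 2−√2, −3+√3)` as an element of `W`. -/
def T11w : W :=
  ⟨((2 : ℤ), (⟨2, -1⟩ : Zsqrtd 2), (⟨-3, 1⟩ : Zsqrtd 3)), by
    rw [mem_W_iff]; refine ⟨?_, ?_, ?_⟩ <;> decide⟩

/-- `T₁₉ = (−6, 2+√2, −1+3√3)` as an element of `W`. -/
def T19w : W :=
  ⟨((-6 : ℤ), (⟨2, 1⟩ : Zsqrtd 2), (⟨-1, 3⟩ : Zsqrtd 3)), by
    rw [mem_W_iff]; refine ⟨?_, ?_, ?_⟩ <;> decide⟩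

/-- `T₂₉ = (2, 4√2, −6−2√3)` as an element of `W`. -/
def T29w : W :=
  ⟨((2 : ℤ), (⟨0, 4⟩ : Zsqrtd 2), (⟨-6, -2⟩ : Zsqrtd 3)), by
    rw [mem_W_iff]; refine ⟨?_, ?_, ?_⟩ <;> decide⟩

/-- The ideal `E′` of `W` generated by `T₂ − 3, T₃ − 4, T₇ − 8, T₁₁ − 12, T₁₉ − 20,
T₂₉ − 30` (i.e. by the elements `T_ℓ − (ℓ+1)·1`). -/
def Eis : Ideal W :=
  Ideal.span {T2w - 3, T3w - 4, T7w - 8, T11w - 12, T19w - 20, T29w - 30}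

theorem nonempty_ringEquiv_zmod_of_intCast_surjective {R : Type*} [Ring R] {n : ℕ}
    (hR : Function.Surjective (Int.cast : ℤ → R)) (hn : (n : R) = 0) (f : R →+* ZMod n) :
    Nonempty (R ≃+* ZMod n) := by
  refine ⟨RingEquiv.ofBijective f ⟨(injective_iff_map_eq_zero f).2 fun x hx ↦ ?_,
    ZMod.ringHom_surjective f⟩⟩
  obtain ⟨m, rfl⟩ := hR x
  rw [map_intCast, ZMod.intCast_zmod_eq_zero_iff_dvd] at hx
  obtain ⟨k, rfl⟩ := hx
  simp [hn]

theorem exists_eq_of_mem_W {x : Rng} (hx : x ∈ W) :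
    ∃ a b s t u : ℤ, x = (a, ⟨a + 2 * s, b⟩, ⟨a - b - 2 * t + 2 * u, b + 2 * t⟩) := by
  obtain ⟨s, hs⟩ := hx.1.dvd
  obtain ⟨u, hu⟩ := hx.2.1.dvd
  obtain ⟨t, ht⟩ := hx.2.2.dvd
  refine ⟨x.1, x.2.1.im, s, t, u, Prod.ext rfl (Prod.ext (Zsqrtd.ext ?_ rfl) (Zsqrtd.ext ?_ ?_))⟩ <;>
    simp only <;> omega

/- Modulo 3 this is c₁ (√3 ↦ 0), modulo 7 it is b₁ + 4b₂ (√2 ↦ 4, as 4² ≡ 2), and modulo 4 it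
is a + b₁ + 2b₂ − c₁ − c₂, which is multiplicative only on W. -/
def evalMod84 : W →+* ZMod 84 where
  toFun x := 21 * x.1.1 + 57 * x.1.2.1.re + 18 * x.1.2.1.im + 7 * x.1.2.2.re + 63 * x.1.2.2.im
  map_one' := by decide
  map_zero' := by decide
  map_add' x y := by
    simp only [AddMemClass.coe_add, Prod.fst_add, Prod.snd_add, Zsqrtd.re_add, Zsqrtd.im_add]
    push_cast
    ring
  map_mul' := by
    rintro ⟨x, hx⟩ ⟨y, hy⟩
    obtain ⟨a, b, s, t, u, rfl⟩ := exists_eq_of_mem_W hx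
    obtain ⟨a', b', s', t', u', rfl⟩ := exists_eq_of_mem_W hy
    simp only [MulMemClass.mk_mul_mk, Prod.mk_mul_mk, Zsqrtd.re_mul, Zsqrtd.im_mul]
    push_cast
    rw [← sub_eq_zero]
    ring_nf
    reduce_mod_char

theorem Eis_le_ker_evalMod84 : Eis ≤ RingHom.ker evalMod84 := by
  rw [Eis, Ideal.span_le]
  rintro g hg
  simp only [Set.mem_insert_iff, Set.mem_singleton_iff] at hg
  rcases hg with rfl | rfl | rfl | rfl | rfl | rfl <;> exact RingHom.mem_ker.2 (by decide)

theorem closure_T2w_T3w : Subring.closure {T2w, T3w} = ⊤ := by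
  refine eq_top_iff.2 fun ⟨x, hx⟩ _ ↦ ?_
  obtain ⟨a, b, s, t, u, rfl⟩ := exists_eq_of_mem_W hx
  have h : (⟨_, hx⟩ : W) = ((a - 2 * b + 3 * s + 2 * t + 3 * u : ℤ) : W)
      + ((4 * b - 3 * s - 2 * t - 3 * u : ℤ) : W) * T2w + ((b - t - u : ℤ) : W) * T3w
      + ((2 * b - s - t - 2 * u : ℤ) : W) * (T2w * T3w)
      + ((s + t + u - b : ℤ) : W) * (T2w * T3w ^ 2) := by
    apply Subtype.ext
    simp only [T2w, T3w, pow_two, AddMemClass.coe_add, MulMemClass.coe_mul,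
      SubringClass.coe_intCast, Prod.fst_add, Prod.snd_add, Prod.fst_mul, Prod.snd_mul,
      Prod.fst_intCast, Prod.snd_intCast, Zsqrtd.re_add, Zsqrtd.im_add, Zsqrtd.re_mul,
      Zsqrtd.im_mul, Zsqrtd.re_intCast, Zsqrtd.im_intCast, Int.cast_id, Prod.ext_iff, Zsqrtd.ext_iff]
    refine ⟨?_, ⟨?_, ?_⟩, ?_, ?_⟩ <;> ring
  have hT2 : T2w ∈ Subring.closure {T2w, T3w} := Subring.subset_closure (by simp)
  have hT3 : T3w ∈ Subring.closure {T2w, T3w} := Subring.subset_closure (by simp)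
  rw [h]
  apply_rules [add_mem, mul_mem, pow_mem, intCast_mem]

theorem T2w_sq_add_mul_T3w_sq : T2w ^ 2 + (T2w + 2) * T3w ^ 2 = 5 := by
  decide

theorem mk_T2w : Ideal.Quotient.mk Eis T2w = 3 := by
  rw [← map_ofNat (Ideal.Quotient.mk Eis), Ideal.Quotient.eq]
  exact Ideal.subset_span (by simp)

theorem mk_T3w : Ideal.Quotient.mk Eis T3w = 4 := by
  rw [← map_ofNat (Ideal.Quotient.mk Eis), Ideal.Quotient.eq]
  exact Ideal.subset_span (by simp)

theorem quotient_Eis_intCast_surjective : Function.Surjective (Int.cast : ℤ → W ⧸ Eis) := by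
  have hle : Subring.closure {T2w, T3w} ≤
      (Int.castRingHom (W ⧸ Eis)).range.comap (Ideal.Quotient.mk Eis) := by
    rw [Subring.closure_le]
    rintro _ (rfl | rfl)
    · exact ⟨3, by simp [mk_T2w]⟩
    · exact ⟨4, by simp [mk_T3w]⟩
  intro y
  obtain ⟨x, rfl⟩ := Ideal.Quotient.mk_surjective y
  exact hle (closure_T2w_T3w ▸ Subring.mem_top x)

theorem quotient_Eis_natCast_84_eq_zero : ((84 : ℕ) : W ⧸ Eis) = 0 := by
  have h := congrArg (Ideal.Quotient.mk Eis) T2w_sq_add_mul_T3w_sq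
  simp only [map_add, map_mul, map_pow, map_ofNat, mk_T2w, mk_T3w] at h
  push_cast
  linear_combination h

/-- The quotient ring `W/E′` is isomorphic to `ℤ/84ℤ`. -/
theorem stmt11 : Nonempty ((W ⧸ Eis) ≃+* ZMod 84) :=
  nonempty_ringEquiv_zmod_of_intCast_surjective quotient_Eis_intCast_surjective
    quotient_Eis_natCast_84_eq_zero (Ideal.Quotient.lift Eis evalMod84 Eis_le_ker_evalMod84)
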